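/- arXiv:1703.04230 — 2 statements merged into one kernel-verified Lean document; each statement's English description precedes it below -/
import Mathlib

section
/- Let H be a finite simple graph with vertex set V and let k be a positive integer. Suppose T ⊆ V is a k-dominating set of H and H is k-T-connected. Then H is k-connected. -/
open SimpleGraph

/-- `HasIDPaths G u v k` : the graph `G` contains `k` pairwise internally disjoint
`u`-`v` paths, i.e. `k` distinct paths sharing no vertices other than `u` and `v`. -/
def HasIDPaths {V : Type*} (G : SimpleGraph V) (u v : V) (k : ℕ) : Prop :=
  ∃ P : Fin k → G.Path u v, Function.Injective P ∧
    ∀ i j, i ≠ j → ∀ w, w ∈ (P i).val.support → w ∈ (P j).val.support → w = u ∨ w = v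

/-- `KConnected G k` : `G` has `k` internally disjoint paths between every pair of nodes. -/
def KConnected {V : Type*} (G : SimpleGraph V) (k : ℕ) : Prop :=
  ∀ u v : V, u ≠ v → HasIDPaths G u v k

/-!
By Menger's theorem it suffices, for non-adjacent `u ≠ v`, that no set `S` of fewer than `k`
vertices avoiding `u` and `v` separates them. As `T` is `k`-dominating, `u` lies in `T` or has a
neighbour `t ∈ T \ S`, and likewise `v` reaches some `t' ∈ T \ S`; at most `|S| < k` of the `k`
internally disjoint `t`–`t'` paths meet `S`, so one of them joins `u` to `v` around `S`.
If `u` and `v` are adjacent, deleting the edge `uv` costs each vertex at most one neighbour in `T`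
and each pair of `T` at most one of its paths, so `H - uv` satisfies the hypotheses for `k - 1`;
the edge `uv` is then the `k`-th path.

Menger's theorem for finite digraphs follows by induction on the arcs: if `D - xy` has an
`A`–`B` separator `S` with `|S| < k`, then `S ∪ {x}` and `S ∪ {y}` are separators of `D` of size
`k`, and `k` disjoint paths from `A` to `S ∪ {x}` and from `S ∪ {y}` to `B` in `D - xy` glue
along `S` and the arc `xy`.
-/

open Finset

namespace List

variable {α : Type*}

theorem exists_eq_append_cons_of_first {p : α → Prop} {l : List α} (h : ∃ x ∈ l, p x) :
    ∃ l₁ a l₂, l = l₁ ++ a :: l₂ ∧ p a ∧ ∀ x ∈ l₁, ¬p x := by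
  classical
  obtain ⟨a, ha⟩ := Option.isSome_iff_exists.1
    (List.find?_isSome (p := fun x => decide (p x)) (xs := l) |>.2 (by simpa using h))
  obtain ⟨hpa, l₁, l₂, rfl, hl₁⟩ := List.find?_eq_some_iff_append.1 ha
  exact ⟨l₁, a, l₂, rfl, by simpa using hpa, by simpa using hl₁⟩

theorem exists_eq_append_cons_of_last {p : α → Prop} {l : List α} (h : ∃ x ∈ l, p x) :
    ∃ l₁ a l₂, l = l₁ ++ a :: l₂ ∧ p a ∧ ∀ x ∈ l₂, ¬p x := by
  obtain ⟨l₁, a, l₂, hl, hpa, hl₁⟩ :=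
    exists_eq_append_cons_of_first (l := l.reverse) (by simpa using h)
  exact ⟨l₂.reverse, a, l₁.reverse, by simpa using congrArg reverse hl, hpa, by simpa using hl₁⟩

end List

section Menger

variable {V : Type*} {D D' : Finset (V × V)} {A B C S X Y Z : Finset V} {k : ℕ} {l p q : List V}
  {a b w x y : V}

def IsABWalk (D : Finset (V × V)) (A B : Finset V) (l : List V) : Prop :=
  l.IsChain (fun a b => (a, b) ∈ D) ∧ (∃ a ∈ A, l.head? = some a) ∧ ∃ b ∈ B, l.getLast? = some b

def IsABSeparator (D : Finset (V × V)) (A B S : Finset V) : Prop :=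
  ∀ l, IsABWalk D A B l → ∃ s ∈ S, s ∈ l

def HasDisjointABWalks (D : Finset (V × V)) (A B : Finset V) (k : ℕ) : Prop :=
  ∃ P : Fin k → List V, (∀ i, IsABWalk D A B (P i)) ∧ Pairwise fun i j => (P i).Disjoint (P j)

theorem IsABWalk.mono (h : IsABWalk D A B l) (hD : D ⊆ D') : IsABWalk D' A B l :=
  ⟨h.1.imp fun _ _ hab => hD hab, h.2⟩

theorem HasDisjointABWalks.mono (h : HasDisjointABWalks D A B k) (hD : D ⊆ D') :
    HasDisjointABWalks D' A B k :=
  let ⟨P, hP, hdisj⟩ := h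
  ⟨P, fun i => (hP i).mono hD, hdisj⟩

theorem IsABWalk.exists_mem_target (h : IsABWalk D A B l) : ∃ b ∈ l, b ∈ B :=
  let ⟨b, hb, hl⟩ := h.2.2
  ⟨b, List.mem_of_getLast? hl, hb⟩

theorem IsABWalk.exists_mem_source (h : IsABWalk D A B l) : ∃ a ∈ l, a ∈ A :=
  let ⟨a, ha, hl⟩ := h.2.1
  ⟨a, List.mem_of_mem_head? hl, ha⟩

theorem IsABWalk.append_overlap (hp : IsABWalk D A X (p ++ [w])) (hq : IsABWalk D Y B (w :: q)) :
    IsABWalk D A B (p ++ w :: q) := by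
  refine ⟨?_, ?_, ?_⟩
  · simpa using hp.1.append_overlap (l₃ := q) (by simpa using hq.1) (List.cons_ne_nil w [])
  · obtain ⟨a, ha, hpa⟩ := hp.2.1
    exact ⟨a, ha, by cases p <;> simp_all⟩
  · obtain ⟨b, hb, hqb⟩ := hq.2.2
    exact ⟨b, hb, by rw [List.getLast?_append_of_ne_nil _ (List.cons_ne_nil w q), hqb]⟩

theorem IsABWalk.append_arc (hp : IsABWalk D A X (p ++ [a])) (hq : IsABWalk D Y B (b :: q))
    (hab : (a, b) ∈ D) : IsABWalk D A B (p ++ a :: b :: q) :=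
  hp.append_overlap (Y := {a})
    ⟨List.isChain_cons_cons.2 ⟨hab, hq.1⟩, ⟨a, mem_singleton_self a, rfl⟩, by simpa using hq.2.2⟩

theorem IsABWalk.exists_prefix (h : IsABWalk D A B l) (hC : ∃ c ∈ l, c ∈ C) :
    ∃ p c, p ++ [c] <+: l ∧ c ∈ C ∧ (∀ z ∈ p, z ∉ C) ∧ IsABWalk D A C (p ++ [c]) := by
  obtain ⟨p, c, r, rfl, hc, hp⟩ := List.exists_eq_append_cons_of_first hC
  have hpre : p ++ [c] <+: p ++ c :: r := ⟨r, by simp⟩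
  obtain ⟨a, ha, hpa⟩ := h.2.1
  refine ⟨p, c, hpre, hc, hp, h.1.infix hpre.isInfix, ⟨a, ha, ?_⟩, ⟨c, hc, by simp⟩⟩
  cases p <;> simp_all

theorem IsABWalk.exists_suffix (h : IsABWalk D A B l) (hC : ∃ c ∈ l, c ∈ C) :
    ∃ c q, c :: q <:+ l ∧ c ∈ C ∧ (∀ z ∈ q, z ∉ C) ∧ IsABWalk D C B (c :: q) := by
  obtain ⟨r, c, q, rfl, hc, hq⟩ := List.exists_eq_append_cons_of_last hC
  have hsuf : c :: q <:+ r ++ c :: q := List.suffix_append r _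
  obtain ⟨b, hb, hqb⟩ := h.2.2
  refine ⟨c, q, hsuf, hc, hq, h.1.infix hsuf.isInfix, ⟨c, hc, rfl⟩, ⟨b, hb, ?_⟩⟩
  rwa [List.getLast?_append_of_ne_nil _ (List.cons_ne_nil c q)] at hqb

theorem isChain_or_mem_of_isChain_insert {e : V × V} [DecidableEq V]
    (h : l.IsChain fun a b => (a, b) ∈ insert e D) :
    (l.IsChain fun a b => (a, b) ∈ D) ∨ e.1 ∈ l.dropLast ∧ e.2 ∈ l.tail := by
  induction l with
  | nil => simp
  | cons a t ih =>
    cases t with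
    | nil => simp
    | cons b t =>
      rw [List.isChain_cons_cons, Finset.mem_insert] at h
      obtain ⟨rfl | hab, ht⟩ := h
      · simp
      · rcases ih ht with h' | ⟨h₁, h₂⟩
        · exact Or.inl (List.isChain_cons_cons.2 ⟨hab, h'⟩)
        · exact Or.inr ⟨by simp [h₁], List.mem_cons_of_mem b (by simpa using h₂)⟩

section Separator

variable [DecidableEq V]

theorem IsABSeparator.insert_arc_fst (hS : IsABSeparator D A B S) (x y : V) :
    IsABSeparator (insert (x, y) D) A B (insert x S) := fun l hl =>
  match isChain_or_mem_of_isChain_insert hl.1 with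
  | .inl h => let ⟨s, hs, hsl⟩ := hS l ⟨h, hl.2⟩; ⟨s, mem_insert_of_mem hs, hsl⟩
  | .inr ⟨hx, _⟩ => ⟨x, mem_insert_self x S, List.mem_of_mem_dropLast hx⟩

theorem IsABSeparator.insert_arc_snd (hS : IsABSeparator D A B S) (x y : V) :
    IsABSeparator (insert (x, y) D) A B (insert y S) := fun l hl =>
  match isChain_or_mem_of_isChain_insert hl.1 with
  | .inl h => let ⟨s, hs, hsl⟩ := hS l ⟨h, hl.2⟩; ⟨s, mem_insert_of_mem hs, hsl⟩
  | .inr ⟨_, hy⟩ => ⟨y, mem_insert_self y S, List.mem_of_mem_tail hy⟩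

theorem IsABSeparator.of_isABSeparator_initial (hX : IsABSeparator (insert (x, y) D) A B X)
    (hx : x ∈ X) (hZ : IsABSeparator D A X Z) : IsABSeparator (insert (x, y) D) A B Z := by
  intro l hl
  obtain ⟨s, hsX, hsl⟩ := hX l hl
  obtain ⟨p, c, hpre, -, hp, hw⟩ := hl.exists_prefix ⟨s, hsl, hsX⟩
  have hwD : IsABWalk D A X (p ++ [c]) := by
    refine ⟨?_, hw.2⟩
    rcases isChain_or_mem_of_isChain_insert hw.1 with h | ⟨hxp, -⟩
    · exact h
    · exact absurd hx (hp x (by simpa using hxp))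
  obtain ⟨z, hz, hzl⟩ := hZ _ hwD
  exact ⟨z, hz, hpre.subset hzl⟩

theorem IsABSeparator.of_isABSeparator_final (hY : IsABSeparator (insert (x, y) D) A B Y)
    (hy : y ∈ Y) (hZ : IsABSeparator D Y B Z) : IsABSeparator (insert (x, y) D) A B Z := by
  intro l hl
  obtain ⟨s, hsY, hsl⟩ := hY l hl
  obtain ⟨c, q, hsuf, -, hq, hw⟩ := hl.exists_suffix ⟨s, hsl, hsY⟩
  have hwD : IsABWalk D Y B (c :: q) := by
    refine ⟨?_, hw.2⟩
    rcases isChain_or_mem_of_isChain_insert hw.1 with h | ⟨-, hyq⟩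
    · exact h
    · exact absurd hy (hq y (by simpa using hyq))
  obtain ⟨z, hz, hzl⟩ := hZ _ hwD
  exact ⟨z, hz, hsuf.subset hzl⟩

end Separator

/-- Splicing the two walks at a common vertex gives an `A`–`B` walk, which meets `S` only there. -/
theorem IsABSeparator.mem_of_mem_of_mem (hS : IsABSeparator D A B S) (hSX : S ⊆ X) (hSY : S ⊆ Y)
    (hP : IsABWalk D A X (p ++ [a])) (hp : ∀ z ∈ p, z ∉ X)
    (hQ : IsABWalk D Y B (b :: q)) (hq : ∀ z ∈ q, z ∉ Y)
    (hwP : w ∈ p ++ [a]) (hwQ : w ∈ b :: q) : w ∈ S ∧ w = a ∧ w = b := by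
  obtain ⟨p₁, r, hPsplit, hp₁⟩ : ∃ p₁ r, p ++ [a] = p₁ ++ w :: r ∧ ∀ z ∈ p₁, z ∈ p := by
    rcases List.mem_append.1 hwP with hw | hw
    · obtain ⟨p₁, p₂, rfl⟩ := List.append_of_mem hw
      exact ⟨p₁, p₂ ++ [a], by simp, fun z hz => by simp [hz]⟩
    · exact ⟨p, [], by simp_all, fun z hz => hz⟩
  obtain ⟨q₁, q₂, hQsplit, hq₂⟩ : ∃ q₁ q₂, b :: q = q₁ ++ w :: q₂ ∧ ∀ z ∈ q₂, z ∈ q := by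
    rcases List.mem_cons.1 hwQ with rfl | hw
    · exact ⟨[], q, rfl, fun z hz => hz⟩
    · obtain ⟨q₁, q₂, rfl⟩ := List.append_of_mem hw
      exact ⟨b :: q₁, q₂, rfl, fun z hz => by simp [hz]⟩
  rw [hPsplit] at hP
  rw [hQsplit] at hQ
  have hW : IsABWalk D A B (p₁ ++ w :: q₂) := by
    obtain ⟨a', ha', hPa'⟩ := hP.2.1
    obtain ⟨b', hb', hQb'⟩ := hQ.2.2
    refine IsABWalk.append_overlap (X := {w}) (Y := {w})
      ⟨hP.1.infix ⟨[], r, by simp⟩, ⟨a', ha', by cases p₁ <;> simp_all⟩, ⟨w, by simp, by simp⟩⟩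
      ⟨hQ.1.infix ⟨q₁, [], by simp⟩, ⟨w, by simp, rfl⟩, ⟨b', hb', ?_⟩⟩
    rwa [List.getLast?_append_of_ne_nil _ (List.cons_ne_nil w q₂)] at hQb'
  obtain ⟨s, hsS, hsW⟩ := hS _ hW
  have hsw : s = w := by
    rcases List.mem_append.1 hsW with hs | hs
    · exact absurd (hSX hsS) (hp s (hp₁ s hs))
    · rcases List.mem_cons.1 hs with hs | hs
      · exact hs
      · exact absurd (hSY hsS) (hq s (hq₂ s hs))
  subst hsw
  refine ⟨hsS, ?_, ?_⟩
  · rcases List.mem_append.1 hwP with hs | hs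
    · exact absurd (hSX hsS) (hp s hs)
    · simpa using hs
  · rcases List.mem_cons.1 hwQ with hs | hs
    · exact hs
    · exact absurd (hSY hsS) (hq s hs)

theorem injective_of_pairwise_disjoint_of_mem {α ι : Type*} {L : ι → List α} {f : ι → α}
    (hf : ∀ i, f i ∈ L i) (h : Pairwise fun i j => (L i).Disjoint (L j)) :
    Function.Injective f := fun i j hij => by
  by_contra hne
  exact h hne (hf i) (hij ▸ hf j)

theorem HasDisjointABWalks.exists_trimmed_target (h : HasDisjointABWalks D A B k) :
    ∃ (p : Fin k → List V) (a : Fin k → V),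
      (∀ i, a i ∈ B ∧ (∀ z ∈ p i, z ∉ B) ∧ IsABWalk D A B (p i ++ [a i])) ∧
      Pairwise fun i j => (p i ++ [a i]).Disjoint (p j ++ [a j]) := by
  obtain ⟨P, hP, hdisj⟩ := h
  choose p a hpre ha hp hw using fun i => (hP i).exists_prefix (hP i).exists_mem_target
  exact ⟨p, a, fun i => ⟨ha i, hp i, hw i⟩,
    fun i j hij => List.disjoint_of_subset_left (hpre i).subset
      (List.disjoint_of_subset_right (hpre j).subset (hdisj hij))⟩

theorem HasDisjointABWalks.exists_trimmed_source (h : HasDisjointABWalks D A B k) :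
    ∃ (b : Fin k → V) (q : Fin k → List V),
      (∀ j, b j ∈ A ∧ (∀ z ∈ q j, z ∉ A) ∧ IsABWalk D A B (b j :: q j)) ∧
      Pairwise fun i j => (b i :: q i).Disjoint (b j :: q j) := by
  obtain ⟨P, hP, hdisj⟩ := h
  choose b q hsuf hb hq hw using fun i => (hP i).exists_suffix (hP i).exists_mem_source
  exact ⟨b, q, fun i => ⟨hb i, hq i, hw i⟩,
    fun i j hij => List.disjoint_of_subset_left (hsuf i).subset
      (List.disjoint_of_subset_right (hsuf j).subset (hdisj hij))⟩

theorem exists_injective_matching [DecidableEq V] {a b : Fin k → V}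
    (ha : Function.Injective a) (hb : Function.Injective b) (haS : ∀ i, a i ∈ insert x S)
    (hbS : ∀ j, b j ∈ insert y S) (hy : y ∉ S) (hk : #S + 1 = k) :
    ∃ J : Fin k → Fin k, Function.Injective J ∧ ∀ i, b (J i) = if a i = x then y else a i := by
  have hsurj : ∀ s ∈ insert y S, ∃ j, b j = s := fun s hs => by
    obtain ⟨j, -, rfl⟩ := Finset.surj_on_of_inj_on_of_card_le (s := univ) (fun j _ => b j)
      (fun j _ => hbS j) (fun _ _ _ _ h => hb h) (by simp [card_insert_of_notMem hy, hk]) s hs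
    exact ⟨j, rfl⟩
  have haS' : ∀ i, a i ≠ x → a i ∈ S := fun i h => (mem_insert.1 (haS i)).resolve_left h
  choose J hJ using fun i => hsurj (if a i = x then y else a i) (by
    split_ifs with h
    exacts [mem_insert_self y S, mem_insert_of_mem (haS' i h)])
  refine ⟨J, fun i j hij => ha ?_, hJ⟩
  have hσ := (hJ i).symm.trans ((congrArg b hij).trans (hJ j))
  split_ifs at hσ with hi hj hj
  · exact hi.trans hj.symm
  · exact absurd (hσ ▸ haS' j hj) hy
  · exact absurd (hσ ▸ haS' i hi) hy
  · exact hσ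

theorem HasDisjointABWalks.insert_arc [DecidableEq V] (hS : IsABSeparator D A B S) (hx : x ∉ S)
    (hy : y ∉ S) (hk : #S + 1 = k) (hP : HasDisjointABWalks D A (insert x S) k)
    (hQ : HasDisjointABWalks D (insert y S) B k) : HasDisjointABWalks (insert (x, y) D) A B k := by
  obtain ⟨p, a, hP, hPd⟩ := hP.exists_trimmed_target
  obtain ⟨b, q, hQ, hQd⟩ := hQ.exists_trimmed_source
  have hb := injective_of_pairwise_disjoint_of_mem (fun j => List.mem_cons_self) hQd
  obtain ⟨J, hJ, hJab⟩ := exists_injective_matching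
    (injective_of_pairwise_disjoint_of_mem (fun i => by simp) hPd) hb (fun i => (hP i).1)
    (fun j => (hQ j).1) hy hk
  have hcross : ∀ i j, ∀ w ∈ p i ++ [a i], w ∈ b j :: q j → w ∈ S ∧ w = a i ∧ w = b j :=
    fun i j _ hwP hwQ => hS.mem_of_mem_of_mem (subset_insert x S) (subset_insert y S)
      (hP i).2.2 (hP i).2.1 (hQ j).2.2 (hQ j).2.1 hwP hwQ
  let R i := if a i = x then p i ++ a i :: b (J i) :: q (J i) else p i ++ a i :: q (J i)
  have hR : ∀ i, ∀ z ∈ R i, z ∈ p i ++ [a i] ∨ z ∈ b (J i) :: q (J i) := by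
    intro i z hz
    simp only [R] at hz
    split_ifs at hz <;> simp only [List.mem_append, List.mem_cons] at hz ⊢ <;>
      tauto
  refine ⟨R, fun i => ?_, fun i j hij z hzi hzj => ?_⟩
  · have hPi := (hP i).2.2.mono (subset_insert (x, y) D)
    have hQi := (hQ (J i)).2.2.mono (subset_insert (x, y) D)
    by_cases hax : a i = x
    · simpa [R, hax] using hPi.append_arc hQi (by simp [hJab, hax])
    · have hba : b (J i) = a i := by rw [hJab, if_neg hax]
      simpa [R, hax] using hPi.append_overlap (hba ▸ hQi)
  · have hcross' : ∀ i j, i ≠ j → z ∈ p i ++ [a i] → z ∉ b (J j) :: q (J j) := by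
      intro i j hij hzP hzQ
      obtain ⟨hzS, rfl, hzb⟩ := hcross i (J j) z hzP hzQ
      have hbij : b (J i) = b (J j) := by rw [hJab i, if_neg fun h => hx (by rwa [← h]), hzb]
      exact hij (hJ (hb hbij))
    rcases hR i z hzi with hPi | hQi <;> rcases hR j z hzj with hPj | hQj
    · exact hPd hij hPi hPj
    · exact hcross' i j hij hPi hQj
    · exact hcross' j i hij.symm hPj hQi
    · exact hQd (hJ.ne hij) hQi hQj

theorem hasDisjointABWalks_empty [DecidableEq V] (h : ∀ S, IsABSeparator ∅ A B S → k ≤ #S) :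
    HasDisjointABWalks ∅ A B k := by
  have hsep : IsABSeparator ∅ A B (A ∩ B) := by
    rintro (_ | ⟨c, _ | ⟨d, l⟩⟩) ⟨hch, ⟨a, ha, hla⟩, ⟨b, hb, hlb⟩⟩
    · simp at hla
    · simp only [List.head?_cons, List.getLast?_singleton, Option.some.injEq] at hla hlb
      exact ⟨c, mem_inter.2 ⟨hla ▸ ha, hlb ▸ hb⟩, List.mem_singleton_self c⟩
    · simp at hch
  obtain ⟨t, htAB, htk⟩ := exists_subset_card_eq (h _ hsep)
  let e : Fin k ≃ t := (t.equivFin.trans (finCongr htk)).symm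
  refine ⟨fun i => [(e i : V)], fun i => ?_, fun i j hij => ?_⟩
  · obtain ⟨ha, hb⟩ := mem_inter.1 (htAB (e i).2)
    exact ⟨List.isChain_singleton _, ⟨_, ha, rfl⟩, ⟨_, hb, rfl⟩⟩
  · simpa [Subtype.val_inj] using e.injective.ne hij.symm

theorem hasDisjointABWalks_of_forall_isABSeparator [DecidableEq V] (D : Finset (V × V))
    (A B : Finset V) (k : ℕ) (h : ∀ S, IsABSeparator D A B S → k ≤ #S) :
    HasDisjointABWalks D A B k := by
  induction D using Finset.induction_on generalizing A B k with
  | empty => exact hasDisjointABWalks_empty h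
  | insert e D _ ih =>
    obtain ⟨x, y⟩ := e
    by_cases hD : ∀ S, IsABSeparator D A B S → k ≤ #S
    · exact (ih A B k hD).mono (subset_insert _ _)
    push Not at hD
    obtain ⟨S, hS, hSk⟩ := hD
    have hxS := hS.insert_arc_fst x y
    have hyS := hS.insert_arc_snd x y
    have hx : x ∉ S := fun hx => (h _ hxS).not_gt (by rwa [insert_eq_of_mem hx])
    have hy : y ∉ S := fun hy => (h _ hyS).not_gt (by rwa [insert_eq_of_mem hy])
    have hk : #S + 1 = k := by
      have := h _ hxS
      rw [card_insert_of_notMem hx] at this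
      omega
    exact HasDisjointABWalks.insert_arc hS hx hy hk
      (ih _ _ _ fun Z hZ => h Z (hxS.of_isABSeparator_initial (mem_insert_self x S) hZ))
      (ih _ _ _ fun Z hZ => h Z (hyS.of_isABSeparator_final (mem_insert_self y S) hZ))

end Menger

section LocalMenger

variable {V : Type*} {G : SimpleGraph V} {k : ℕ} {u v : V}

theorem SimpleGraph.Walk.exists_support_eq_cons_append {p : G.Walk u v} (hp : ¬p.Nil) :
    ∃ m, p.support = u :: (m ++ [v]) := by
  cases p with
  | nil => simp at hp
  | cons h q =>
    refine ⟨q.support.dropLast, ?_⟩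
    rw [support_cons]
    congr 1
    nth_rw 1 [← List.dropLast_append_getLast q.support_ne_nil, q.getLast_support]

theorem SimpleGraph.Walk.exists_support_eq_cons_append_of_isChain {m : List V}
    (h : (u :: (m ++ [v])).IsChain G.Adj) : ∃ w : G.Walk u v, w.support = u :: (m ++ [v]) := by
  induction m generalizing u with
  | nil => exact ⟨cons (List.isChain_pair.1 h) nil, rfl⟩
  | cons a m ih =>
    obtain ⟨hua, h⟩ := List.isChain_cons_cons.1 h
    obtain ⟨w, hw⟩ := ih h
    exact ⟨cons hua w, by simp [hw]⟩

theorem hasIDPaths_of_walks (huv : u ≠ v) (hadj : ¬G.Adj u v) (W : Fin k → G.Walk u v)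
    (hW : ∀ i j, i ≠ j → ∀ w ∈ (W i).support, w ∈ (W j).support → w = u ∨ w = v) :
    HasIDPaths G u v k := by
  classical
  have hsub := fun i => Walk.support_toPath_subset_support (W i)
  refine ⟨fun i => (W i).toPath, fun i j (hij : (W i).toPath = (W j).toPath) => ?_,
    fun i j hij w hwi hwj => hW i j hij w (hsub i hwi) (hsub j hwj)⟩
  by_contra hne
  have hnil : ¬((W i).toPath : G.Walk u v).Nil := Walk.not_nil_of_ne huv
  have hsnd := List.mem_of_mem_tail (Walk.snd_mem_tail_support hnil)
  have hadj_snd := Walk.adj_snd hnil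
  rcases hW i j hne _ (hsub i hsnd) (hsub j (hij ▸ hsnd)) with h | h
  · exact G.ne_of_adj hadj_snd h.symm
  · exact hadj (h ▸ hadj_snd)

theorem exists_walk_support_eq_of_isABWalk {D : Finset (V × V)} {A B : Finset V} {l : List V}
    (hD : ∀ p ∈ D, G.Adj p.1 p.2) (hA : ∀ a ∈ A, G.Adj u a) (hB : ∀ b ∈ B, G.Adj b v)
    (hl : IsABWalk D A B l) : ∃ w : G.Walk u v, w.support = u :: (l ++ [v]) := by
  obtain ⟨hch, ⟨a, ha, hla⟩, ⟨b, hb, hlb⟩⟩ := hl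
  have hne : l ≠ [] := by rintro rfl; simp at hla
  have hch' : (u :: (l ++ [v])).IsChain G.Adj := by
    refine List.isChain_cons.2 ⟨?_, List.isChain_append.2 ⟨hch.imp fun x y h => hD (x, y) h,
      List.isChain_singleton v, ?_⟩⟩
    · simpa [List.head?_append_of_ne_nil _ hne, hla] using hA a ha
    · simpa [hlb] using hB b hb
  exact Walk.exists_support_eq_cons_append_of_isChain hch'

theorem SimpleGraph.Walk.IsPath.ne_of_support_eq {p : G.Walk u v} {m : List V} (hp : p.IsPath)
    (hm : p.support = u :: (m ++ [v])) {z : V} (hz : z ∈ m) : z ≠ u ∧ z ≠ v := by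
  have hnd := hp.support_nodup
  rw [hm] at hnd
  simp only [List.nodup_cons, List.nodup_append, List.mem_append] at hnd
  grind

theorem isABWalk_of_support_eq {D : Finset (V × V)} {A B : Finset V} {p : G.Walk u v}
    {m : List V} (hp : p.IsPath) (hm : p.support = u :: (m ++ [v])) (hadj : ¬G.Adj u v)
    (hD : ∀ a b, G.Adj a b → a ≠ u → a ≠ v → b ≠ u → b ≠ v → (a, b) ∈ D)
    (hA : ∀ a, G.Adj u a → a ∈ A) (hB : ∀ b, G.Adj b v → b ∈ B) : IsABWalk D A B m := by
  have hch : (u :: (m ++ [v])).IsChain G.Adj := hm ▸ p.isChain_adj_support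
  have hmuv := fun z (hz : z ∈ m) => hp.ne_of_support_eq hm hz
  have hne : m ≠ [] := by
    rintro rfl
    exact hadj (List.isChain_cons_cons.1 hch).1
  obtain ⟨hu, hmv⟩ := List.isChain_cons.1 hch
  obtain ⟨hm, -, hv⟩ := List.isChain_append.1 hmv
  refine ⟨hm.imp_of_mem_imp fun a b ha hb hab =>
      hD a b hab (hmuv a ha).1 (hmuv a ha).2 (hmuv b hb).1 (hmuv b hb).2,
    ⟨m.head hne, hA _ (hu _ ?_), List.head?_eq_some_head hne⟩,
    ⟨m.getLast hne, hB _ (hv _ (List.getLast?_eq_some_getLast hne) v rfl),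
      List.getLast?_eq_some_getLast hne⟩⟩
  simp [List.head?_append_of_ne_nil _ hne, List.head?_eq_some_head hne]

theorem hasIDPaths_of_forall_exists_walk_avoiding [Finite V] (huv : u ≠ v) (hadj : ¬G.Adj u v)
    (h : ∀ S : Finset V, u ∉ S → v ∉ S → #S < k → ∃ w : G.Walk u v, ∀ x ∈ w.support, x ∉ S) :
    HasIDPaths G u v k := by
  classical
  have := Fintype.ofFinite V
  -- A `u`–`v` path of `G` without its ends is an `N(u)`–`N(v)` walk avoiding `u` and `v`.
  let D : Finset (V × V) := {p | G.Adj p.1 p.2 ∧ p.1 ≠ u ∧ p.1 ≠ v ∧ p.2 ≠ u ∧ p.2 ≠ v}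
  let A : Finset V := {a | G.Adj u a}
  let B : Finset V := {b | G.Adj b v}
  obtain ⟨P, hP, hdisj⟩ := hasDisjointABWalks_of_forall_isABSeparator D A B k fun S hS => by
    by_contra! hSk
    obtain ⟨w, hw⟩ :=
      h (S \ {u, v}) (by simp) (by simp) ((card_le_card sdiff_subset).trans_lt hSk)
    let p := w.toPath
    obtain ⟨m, hm⟩ := Walk.exists_support_eq_cons_append (p := p.val) (Walk.not_nil_of_ne huv)
    obtain ⟨s, hsS, hsm⟩ := hS m (isABWalk_of_support_eq p.2 hm hadj
      (fun a b hab hau hav hbu hbv => by simp [D, hab, hau, hav, hbu, hbv]) (by simp [A])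
      (by simp [B]))
    have hsw : s ∈ p.val.support := by simp [hm, hsm]
    have hsuv := p.2.ne_of_support_eq hm hsm
    exact hw s (Walk.support_toPath_subset_support w hsw) (by simp [hsS, hsuv.1, hsuv.2])
  choose W hW using fun i => exists_walk_support_eq_of_isABWalk (G := G) (u := u) (v := v)
    (by simp +contextual [D]) (by simp [A]) (by simp [B]) (hP i)
  refine hasIDPaths_of_walks huv hadj W fun i j hij w hwi hwj => ?_
  rw [hW] at hwi hwj
  simp only [List.mem_cons, List.mem_append, List.not_mem_nil, or_false] at hwi hwj
  by_contra! hw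
  exact hdisj hij ((hwi.resolve_left hw.1).resolve_right hw.2)
    ((hwj.resolve_left hw.1).resolve_right hw.2)

end LocalMenger

section Graph

variable {V : Type*} {G H : SimpleGraph V} {T : Set V} {k : ℕ} {u v t t' : V}

def IsKDominating (H : SimpleGraph V) (T : Set V) (k : ℕ) : Prop :=
  ∀ v : V, v ∉ T → k ≤ (T ∩ H.neighborSet v).ncard

def IsKTConnected (H : SimpleGraph V) (T : Set V) (k : ℕ) : Prop :=
  ∀ u v : V, u ∈ T → v ∈ T → u ≠ v → HasIDPaths H u v k

theorem hasIDPaths_zero : HasIDPaths G u v 0 :=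
  ⟨Fin.elim0, fun i => i.elim0, fun i => i.elim0⟩

theorem HasIDPaths.exists_walk_avoiding {S : Finset V} (h : HasIDPaths G t t' k) (ht : t ∉ S)
    (ht' : t' ∉ S) (hS : #S < k) : ∃ w : G.Walk t t', ∀ x ∈ w.support, x ∉ S := by
  obtain ⟨P, -, hP⟩ := h
  by_contra! hmeet
  choose f hf hfS using fun i => hmeet (P i).val
  obtain ⟨i, -, j, -, hij, hfij⟩ := Finset.exists_ne_map_eq_of_card_lt_of_maps_to
    (s := univ) (t := S) (by simpa using hS) fun i _ => hfS i
  rcases hP i j hij (f i) (hf i) (hfij ▸ hf j) with h | h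
  · exact ht (h ▸ hfS i)
  · exact ht' (h ▸ hfS i)

theorem IsKDominating.exists_walk_avoiding {S : Finset V} (hT : IsKDominating H T k)
    (hu : u ∉ S) (hS : #S < k) : ∃ t ∈ T, ∃ w : H.Walk u t, ∀ x ∈ w.support, x ∉ S := by
  by_cases huT : u ∈ T
  · exact ⟨u, huT, .nil, by simpa⟩
  obtain ⟨t, ⟨htT, hut : H.Adj u t⟩, htS⟩ := Set.exists_mem_notMem_of_ncard_lt_ncard
    ((Set.ncard_coe_finset S).trans_lt (hS.trans_le (hT u huT))) S.finite_toSet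
  exact ⟨t, htT, hut.toWalk, by simp_all [Adj.toWalk]⟩

theorem exists_walk_avoiding_of_isKDominating_of_isKTConnected {S : Finset V}
    (hdom : IsKDominating H T k) (hconn : IsKTConnected H T k) (hu : u ∉ S) (hv : v ∉ S)
    (hS : #S < k) : ∃ w : H.Walk u v, ∀ x ∈ w.support, x ∉ S := by
  obtain ⟨t, htT, wu, hwu⟩ := hdom.exists_walk_avoiding hu hS
  obtain ⟨t', ht'T, wv, hwv⟩ := hdom.exists_walk_avoiding hv hS
  obtain ⟨w, hw⟩ : ∃ w : H.Walk t t', ∀ x ∈ w.support, x ∉ S := by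
    by_cases htt' : t = t'
    · subst htt'
      exact ⟨.nil, by simpa using hwu t (Walk.end_mem_support wu)⟩
    exact (hconn t t' htT ht'T htt').exists_walk_avoiding (hwu t (Walk.end_mem_support wu))
      (hwv t' (Walk.end_mem_support wv)) hS
  refine ⟨wu.append (w.append wv.reverse), fun x hx => ?_⟩
  simp only [Walk.mem_support_append_iff, Walk.support_reverse, List.mem_reverse] at hx
  rcases hx with hx | hx | hx
  exacts [hwu x hx, hw x hx, hwv x hx]

theorem hasIDPaths_of_not_adj [Finite V] (hdom : IsKDominating H T k)
    (hconn : IsKTConnected H T k) (huv : u ≠ v) (hadj : ¬H.Adj u v) : HasIDPaths H u v k :=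
  hasIDPaths_of_forall_exists_walk_avoiding huv hadj fun _ hu hv hS =>
    exists_walk_avoiding_of_isKDominating_of_isKTConnected hdom hconn hu hv hS

theorem IsKDominating.deleteEdges [Finite V] (h : IsKDominating H T (k + 1)) (e : Sym2 V) :
    IsKDominating (H.deleteEdges {e}) T k := by
  intro w hw
  have hsub : T ∩ H.neighborSet w ⊆
      (T ∩ (H.deleteEdges {e}).neighborSet w) ∪ {x | s(w, x) = e} := by
    rintro x ⟨hxT, hx⟩
    by_cases hxe : s(w, x) = e
    · exact Or.inr hxe
    · exact Or.inl ⟨hxT, deleteEdges_adj.2 ⟨hx, hxe⟩⟩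
  have hone : {x | s(w, x) = e}.ncard ≤ 1 :=
    (Set.ncard_le_one (Set.toFinite _)).2 fun a ha b hb => Sym2.congr_right.1 (ha.trans hb.symm)
  have := (Set.ncard_le_ncard hsub).trans (Set.ncard_union_le _ _)
  have := h w hw
  omega

theorem SimpleGraph.Walk.IsPath.eq_of_mem_edges_of_internally_disjoint {p q : G.Walk t t'}
    {e : Sym2 V} (hp : p.IsPath) (hq : q.IsPath)
    (hdisj : ∀ w ∈ p.support, w ∈ q.support → w = t ∨ w = t') (he : e ∈ p.edges)
    (he' : e ∈ q.edges) : p = q := by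
  induction e using Sym2.ind with | h a b => ?_
  have hab := G.ne_of_adj (p.adj_of_mem_edges he)
  have ha := hdisj a (p.fst_mem_support_of_mem_edges he) (q.fst_mem_support_of_mem_edges he')
  have hb := hdisj b (p.snd_mem_support_of_mem_edges he) (q.snd_mem_support_of_mem_edges he')
  obtain ⟨rfl, rfl⟩ | ⟨rfl, rfl⟩ : a = t ∧ b = t' ∨ a = t' ∧ b = t := by grind
  · exact (hp.eq_adj_toWalk_of_mem_edges he).trans (hq.eq_adj_toWalk_of_mem_edges he').symm
  · rw [Sym2.eq_swap] at he he'
    exact (hp.eq_adj_toWalk_of_mem_edges he).trans (hq.eq_adj_toWalk_of_mem_edges he').symm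

theorem HasIDPaths.deleteEdges (h : HasIDPaths G t t' (k + 1)) (e : Sym2 V) :
    HasIDPaths (G.deleteEdges {e}) t t' k := by
  obtain ⟨P, hinj, hdisj⟩ := h
  obtain ⟨j, hj⟩ : ∃ j, ∀ i ≠ j, e ∉ (P i).val.edges := by
    by_cases he : ∃ j, e ∈ (P j).val.edges
    · obtain ⟨j, hj⟩ := he
      exact ⟨j, fun i hij hi => hij (hinj (Subtype.ext
        ((P i).2.eq_of_mem_edges_of_internally_disjoint (P j).2 (hdisj i j hij) hi hj)))⟩
    · push Not at he
      exact ⟨0, fun i _ => he i⟩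
  refine ⟨fun i => ⟨(P (j.succAbove i)).val.toDeleteEdge e (hj _ (Fin.succAbove_ne j i)),
    Walk.IsPath.toDeleteEdges _ {e} (P _).2 _⟩, fun i i' hii' => ?_, fun i i' hii' w hw hw' => ?_⟩
  · have := congrArg (fun p : (G.deleteEdges {e}).Path t t' => p.val.support) hii'
    simp only [Walk.support_transfer] at this
    exact Fin.succAbove_right_injective (hinj (Subtype.ext (Walk.ext_support this)))
  · simp only [Walk.support_transfer] at hw hw'
    exact hdisj _ _ (Fin.succAbove_right_injective.ne hii') w hw hw'

theorem IsKTConnected.deleteEdges (h : IsKTConnected H T (k + 1)) (e : Sym2 V) :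
    IsKTConnected (H.deleteEdges {e}) T k :=
  fun u v hu hv huv => (h u v hu hv huv).deleteEdges e

theorem HasIDPaths.succ_of_adj (h : HasIDPaths (G.deleteEdges {s(u, v)}) u v k)
    (huv : G.Adj u v) : HasIDPaths G u v (k + 1) := by
  obtain ⟨P, hinj, hdisj⟩ := h
  let Q : Fin k → G.Path u v := fun i => ⟨(P i).val.mapLe (G.deleteEdges_le _), (P i).2.mapLe _⟩
  refine ⟨Fin.cons (Path.singleton huv) Q, Fin.cons_injective_iff.2 ⟨?_, fun i j hij => ?_⟩,
    fun i j hij w => ?_⟩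
  · rintro ⟨i, hi⟩
    have huvQ : s(u, v) ∈ (Q i).val.edges := hi ▸ Path.mk'_mem_edges_singleton huv
    simp only [Q, Walk.edges_mapLe_eq_edges] at huvQ
    simpa using (P i).val.edges_subset_edgeSet huvQ
  · have := congrArg (fun p : G.Path u v => p.val.support) hij
    simp only [Q, Walk.support_mapLe_eq_support] at this
    exact hinj (Subtype.ext (Walk.ext_support this))
  · cases i using Fin.cases with
    | zero => simp +contextual
    | succ i =>
      cases j using Fin.cases with
      | zero => simp +contextual
      | succ j =>
        simpa [Q] using hdisj i j (fun h => hij (congrArg Fin.succ h)) w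

end Graph

theorem kT_connected_and_kDominating_implies_kConnected_general
    {V : Type*} [Fintype V] (H : SimpleGraph V) (k : ℕ)
    (T : Set V)
    (hdom : ∀ v : V, v ∉ T → k ≤ (T ∩ H.neighborSet v).ncard)
    (hTconn : ∀ u v : V, u ∈ T → v ∈ T → u ≠ v → HasIDPaths H u v k) :
    KConnected H k := by
  intro u v huv
  by_cases hadj : H.Adj u v
  · obtain _ | k := k
    · exact hasIDPaths_zero
    refine HasIDPaths.succ_of_adj ?_ hadj
    exact hasIDPaths_of_not_adj (IsKDominating.deleteEdges hdom _)
      (IsKTConnected.deleteEdges hTconn _) huv (by simp)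
  · exact hasIDPaths_of_not_adj hdom hTconn huv hadj

/-- If `T` is a `k`-dominating set of `H` (every node outside `T` has at least `k`
neighbors in `T`) and `H` is `k`-`T`-connected (there are `k` internally disjoint paths
between every pair of nodes of `T`), then `H` is `k`-connected. -/
theorem kT_connected_and_kDominating_implies_kConnected
    {V : Type*} [Fintype V] (H : SimpleGraph V) (k : ℕ) (hk : 0 < k)
    (T : Set V)
    (hdom : ∀ v : V, v ∉ T → k ≤ (T ∩ H.neighborSet v).ncard)
    (hTconn : ∀ u v : V, u ∈ T → v ∈ T → u ≠ v → HasIDPaths H u v k) :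
    KConnected H k :=
  kT_connected_and_kDominating_implies_kConnected_general H k T hdom hTconn
end

section
/- Let k ∈ {2, 3} and let H_r be a finite simple graph with a designated node r such that H_r is k-in-connected to r and the set R = Γ_{H_r}(r) of neighbors of r satisfies |R| = k. Then H_r is k-connected. -/
open SimpleGraph

/-!
Pairs containing `r` are covered by the hypothesis. For `u, v ≠ r`, Menger's theorem reduces the
claim to: every set `T ∌ u, v` meeting all `u`–`v` walks has at least `k` vertices (at least
`k - 1` in `G - uv` if `u` and `v` are adjacent, the edge `uv` then being the `k`-th path; in
`G - uv` each of `u`, `v` keeps `k - 1` paths to `r` after discarding the one through the other).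
If `r ∉ T`, then `T` separates `r` from `u` or from `v`, so it meets each of the `k` paths from
that vertex to `r`. If `r ∈ T` and `|T| < k`, two of the paths from `u` to `r` avoid `T - r`, so
`u` reaches two neighbours of `r` without meeting `T`; so does `v`, and since `T` separates `u`
from `v` these are four distinct neighbours of `r`, which has only `k ≤ 3`.

Menger's theorem is proved by induction on the number of edges for vertex sets `A`, `B`, and
applied to the neighbourhoods of `u` and `v` in `G - {u, v}`.
-/

theorem Set.range_eq_of_injective_of_ncard_eq {α : Type*} [Finite α] {k : ℕ} {d : Fin k → α}
    {Y : Set α} (hd : ∀ i, d i ∈ Y) (hinj : Function.Injective d) (hY : Y.ncard = k) :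
    Set.range d = Y :=
  Set.eq_of_subset_of_ncard_le (Set.range_subset_iff.2 hd)
    (by rw [hY, Set.ncard_range_of_injective hinj, Nat.card_fin])

namespace SimpleGraph

variable {V : Type*} {G : SimpleGraph V} {A B S T X W : Set V} {a b c d r u v w x y z : V}
  {k : ℕ}

def Separates (G : SimpleGraph V) (S A B : Set V) : Prop :=
  ∀ a ∈ A, ∀ b ∈ B, ∀ p : G.Walk a b, ∃ s ∈ p.support, s ∈ S

def reachAvoiding (G : SimpleGraph V) (A S : Set V) : Set V :=
  {z | ∃ a ∈ A, ∃ p : G.Walk a z, ∀ w ∈ p.support, w ∉ S}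

-- Walks suffice: `Walk.bypass` shortens them to paths and keeps them disjoint.
def HasDisjointWalks (G : SimpleGraph V) (A B : Set V) (k : ℕ) : Prop :=
  ∃ (a b : Fin k → V) (P : ∀ i, G.Walk (a i) (b i)), (∀ i, a i ∈ A) ∧ (∀ i, b i ∈ B) ∧
    Pairwise fun i j => (P i).support.Disjoint (P j).support

theorem Separates.symm (h : G.Separates S A B) : G.Separates S B A := fun b hb a ha p => by
  simpa using h a ha b hb p.reverse

theorem notMem_of_mem_reachAvoiding (h : z ∈ G.reachAvoiding A S) : z ∉ S := by
  obtain ⟨a, -, p, hp⟩ := h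
  exact hp z p.end_mem_support

theorem mem_reachAvoiding_of_mem (ha : a ∈ A) (haS : a ∉ S) : a ∈ G.reachAvoiding A S :=
  ⟨a, ha, .nil, by simpa⟩

theorem reachAvoiding_anti (h : S ⊆ T) : G.reachAvoiding A T ⊆ G.reachAvoiding A S :=
  fun _ ⟨a, ha, p, hp⟩ => ⟨a, ha, p, fun w hw hwS => hp w hw (h hwS)⟩

theorem mem_reachAvoiding_of_adj (hx : x ∈ G.reachAvoiding A S) (hxy : G.Adj x y) (hy : y ∉ S) :
    y ∈ G.reachAvoiding A S := by
  obtain ⟨a, ha, p, hp⟩ := hx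
  refine ⟨a, ha, p.concat hxy, fun w hw => ?_⟩
  rw [Walk.support_concat, List.mem_append, List.mem_singleton] at hw
  exact hw.elim (hp w) (· ▸ hy)

theorem Separates.disjoint_reachAvoiding (h : G.Separates S A B) :
    Disjoint (G.reachAvoiding A S) (G.reachAvoiding B S) := by
  refine Set.disjoint_left.2 fun z ⟨a, ha, p, hp⟩ ⟨b, hb, q, hq⟩ => ?_
  obtain ⟨s, hs, hsS⟩ := h a ha b hb (p.append q.reverse)
  rw [Walk.mem_support_append_iff, Walk.support_reverse, List.mem_reverse] at hs
  exact hs.elim (hp s · hsS) (hq s · hsS)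

theorem reachAvoiding_insert_subset_deleteEdges :
    G.reachAvoiding A (insert x S) ⊆ (G.deleteEdges {s(x, y)}).reachAvoiding A S := by
  rintro z ⟨a, ha, p, hp⟩
  have he : s(x, y) ∉ p.edges := fun he =>
    hp x (p.fst_mem_support_of_mem_edges he) (Set.mem_insert x S)
  exact ⟨a, ha, p.toDeleteEdge _ he, fun w hw hwS => hp w (by simpa using hw) (Or.inr hwS)⟩

theorem HasDisjointWalks.mono {H : SimpleGraph V} (h : G.HasDisjointWalks A B k) (hle : G ≤ H) :
    H.HasDisjointWalks A B k := by
  obtain ⟨a, b, P, ha, hb, hP⟩ := h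
  exact ⟨a, b, fun i => (P i).mapLe hle, ha, hb, by simpa [Walk.support_mapLe_eq_support] using hP⟩

theorem injective_of_pairwise_disjoint {ι : Type*} {s : ι → List V}
    (hs : Pairwise fun i j => (s i).Disjoint (s j)) {f : ι → V} (hf : ∀ i, f i ∈ s i) :
    Function.Injective f := by
  intro i j hij
  by_contra hne
  exact hs hne (hf i) (hij ▸ hf j)

theorem Walk.exists_prefix_first_mem :
    ∀ {a b : V} (p : G.Walk a b), (∃ x ∈ p.support, x ∈ X) →
      ∃ c ∈ X, ∃ q : G.Walk a c, q.support ⊆ p.support ∧ ∀ w ∈ q.support, w ∈ X → w = c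
  | a, _, .nil, h => by
    obtain ⟨x, hx, hxX⟩ := h
    rw [Walk.support_nil, List.mem_singleton] at hx
    exact ⟨a, hx ▸ hxX, .nil, by simp, by simp⟩
  | a, _, .cons hadj p, h => by
    by_cases ha : a ∈ X
    · exact ⟨a, ha, .nil, by simp, by simp⟩
    obtain ⟨c, hc, q, hqp, hq⟩ := p.exists_prefix_first_mem <| by
      simpa [ha] using h
    refine ⟨c, hc, .cons hadj q, List.cons_subset_cons _ hqp, fun w hw hwX => ?_⟩
    rw [Walk.support_cons, List.mem_cons] at hw
    exact hw.elim (fun h => absurd (h ▸ hwX) ha) (hq w · hwX)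

theorem Walk.exists_isPath_first_mem [DecidableEq V] (p : G.Walk a b) (h : ∃ x ∈ p.support, x ∈ X) :
    ∃ c ∈ X, ∃ q : G.Walk a c, q.IsPath ∧ q.support ⊆ p.support ∧
      ∀ w ∈ q.support, w ∈ X → w = c := by
  obtain ⟨c, hc, q, hqp, hq⟩ := p.exists_prefix_first_mem h
  exact ⟨c, hc, q.bypass, q.bypass_isPath, fun _ hw => hqp (q.support_bypass_subset_support hw),
    fun w hw => hq w (q.support_bypass_subset_support hw)⟩

theorem Walk.IsPath.mem_reachAvoiding {q : G.Walk a c} (hq : q.IsPath) (ha : a ∈ A)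
    (hX : ∀ w ∈ q.support, w ∈ X → w = c) :
    ∀ w ∈ q.support, w = c ∨ w ∈ G.reachAvoiding A X := by
  classical
  intro w hw
  refine or_iff_not_imp_left.2 fun hwc => ⟨a, ha, q.takeUntil w hw, fun z hz hzX => ?_⟩
  have hzc := hX z (q.support_takeUntil_subset_support hw hz) hzX
  exact Walk.endpoint_notMem_support_takeUntil hq hw (Ne.symm hwc) (hzc ▸ hz)

theorem Walk.exists_walk_of_eq_or_adj (p : G.Walk a b) (h : c = b ∨ G.Adj b c) :
    ∃ q : G.Walk a c, ∀ z ∈ q.support, z ∈ p.support ∨ z = c := by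
  rcases h with rfl | h
  · exact ⟨p, fun z hz => .inl hz⟩
  · exact ⟨p.concat h, by simp [Walk.support_concat]⟩

theorem HasDisjointWalks.exists_fan (h : G.HasDisjointWalks A X k) :
    ∃ (a c : Fin k → V) (P : ∀ i, G.Walk (a i) (c i)), (∀ i, a i ∈ A) ∧ (∀ i, c i ∈ X) ∧
      (Pairwise fun i j => (P i).support.Disjoint (P j).support) ∧
      ∀ i, ∀ w ∈ (P i).support, w = c i ∨ w ∈ G.reachAvoiding A X := by
  classical
  obtain ⟨a, b, P, ha, hb, hP⟩ := h
  choose c hc Q hQ hQP hQX using fun i =>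
    (P i).exists_isPath_first_mem ⟨b i, (P i).end_mem_support, hb i⟩
  exact ⟨a, c, Q, ha, hc, fun i j hij z hzi hzj => hP hij (hQP i hzi) (hQP j hzj),
    fun i => (hQ i).mem_reachAvoiding (ha i) (hQX i)⟩

theorem hasDisjointWalks_of_glue {a b c d : Fin k → V} {f : V → V} (hf : f.Injective)
    (P : ∀ i, G.Walk (a i) (c i)) (Q : ∀ i, G.Walk (b i) (d i)) (ha : ∀ i, a i ∈ A)
    (hb : ∀ i, b i ∈ B) (hP : Pairwise fun i j => (P i).support.Disjoint (P j).support)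
    (hQ : Pairwise fun i j => (Q i).support.Disjoint (Q j).support)
    (hlink : ∀ i, f (c i) = c i ∨ G.Adj (c i) (f (c i))) (hcd : ∀ i, ∃ j, d j = f (c i))
    (hPQ : ∀ i j, ∀ z ∈ (P i).support, z ∈ (Q j).support → d j = f (c i)) :
    G.HasDisjointWalks A B k := by
  choose σ hσ using hcd
  have hc := injective_of_pairwise_disjoint hP fun i => (P i).end_mem_support
  have hL : ∀ i, ∃ L : G.Walk (a i) (b (σ i)),
      ∀ z ∈ L.support, z ∈ (P i).support ∨ z ∈ (Q (σ i)).support := fun i => by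
    obtain ⟨L, hL⟩ := (P i).exists_walk_of_eq_or_adj (hσ i ▸ hlink i)
    refine ⟨L.append (Q (σ i)).reverse, fun z hz => ?_⟩
    rw [Walk.mem_support_append_iff, Walk.support_reverse, List.mem_reverse] at hz
    rcases hz with hz | hz
    · exact (hL z hz).imp_right fun (h : z = d (σ i)) => h ▸ (Q (σ i)).end_mem_support
    · exact .inr hz
  choose L hL using hL
  refine ⟨a, fun i => b (σ i), L, ha, fun i => hb _, fun i j hij z hzi hzj => ?_⟩
  have hσij : σ i ≠ σ j := fun h => hij (hc (hf (by rw [← hσ i, ← hσ j, h])))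
  rcases hL i z hzi with hzi | hzi <;> rcases hL j z hzj with hzj | hzj
  · exact hP hij hzi hzj
  · exact hij (hc (hf ((hσ j).symm.trans (hPQ i (σ j) z hzi hzj)).symm))
  · exact hij (hc (hf ((hσ i).symm.trans (hPQ j (σ i) z hzj hzi))))
  · exact hQ hσij hzi hzj

theorem Separates.insert_of_deleteEdges (h : (G.deleteEdges {s(x, y)}).Separates S A B) :
    G.Separates (insert x S) A B := by
  intro a ha b hb p
  by_contra! hp
  have he : s(x, y) ∉ p.edges := fun he =>
    hp x (p.fst_mem_support_of_mem_edges he) (Set.mem_insert x S)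
  obtain ⟨s, hs, hsS⟩ := h a ha b hb (p.toDeleteEdge _ he)
  exact hp s (by simpa using hs) (Or.inr hsS)

theorem Separates.of_separates_deleteEdges_insert (hxy : G.Adj x y)
    (hS : (G.deleteEdges {s(x, y)}).Separates S A B)
    (hy : y ∉ (G.deleteEdges {s(x, y)}).reachAvoiding A S) (hyS : y ∉ S)
    (hT : (G.deleteEdges {s(x, y)}).Separates T A (insert x S)) : G.Separates T A B := by
  classical
  intro a ha b hb p
  obtain ⟨c, hc, q, hq, hqp, hqX⟩ :=
    p.exists_isPath_first_mem (hS.insert_of_deleteEdges a ha b hb p)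
  have he : s(x, y) ∉ q.edges := fun he => by
    rcases hq.mem_reachAvoiding ha hqX y (q.snd_mem_support_of_mem_edges he) with rfl | hyA
    · exact hc.elim hxy.ne' hyS
    · exact hy (reachAvoiding_insert_subset_deleteEdges hyA)
  obtain ⟨t, ht, htT⟩ := hT a ha c hc (q.toDeleteEdge _ he)
  exact ⟨t, hqp (by simpa using ht), htT⟩

-- Where the two fans built in `hasDisjointWalks_of_separates_deleteEdges` can meet: only at a
-- common end, in `S`.
theorem Separates.eq_swap_of_mem_reachAvoiding [DecidableEq V] (hS : G.Separates S A B)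
    (hx : x ∈ G.reachAvoiding A S) (hy : y ∉ G.reachAvoiding A S) (hyS : y ∉ S)
    (hc : c ∈ insert x S) (hd : d ∈ insert y S)
    (hzc : z = c ∨ z ∈ G.reachAvoiding A (insert x S))
    (hzd : z = d ∨ z ∈ G.reachAvoiding B (insert y S)) : d = Equiv.swap x y c := by
  have hxS : x ∉ S := notMem_of_mem_reachAvoiding hx
  have hA := reachAvoiding_anti (G := G) (A := A) (Set.subset_insert x S)
  have hB := reachAvoiding_anti (G := G) (A := B) (Set.subset_insert y S)
  have hAB := Set.disjoint_left.1 hS.disjoint_reachAvoiding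
  rcases hzc with rfl | hzA <;> rcases hzd with hzd | hzB
  · rcases hc with rfl | h
    · rcases hzd ▸ hd with h' | h'
      · exact absurd (h' ▸ hx) hy
      · exact absurd h' hxS
    · rw [Equiv.swap_apply_of_ne_of_ne (ne_of_mem_of_not_mem h hxS)
        (ne_of_mem_of_not_mem h hyS), hzd]
  · rcases hc with rfl | h
    · exact absurd (hB hzB) (hAB hx)
    · exact absurd (Set.mem_insert_of_mem y h) (notMem_of_mem_reachAvoiding hzB)
  · rcases hd with rfl | h
    · exact absurd (hA (hzd ▸ hzA)) hy
    · exact absurd (Set.mem_insert_of_mem x (hzd ▸ h)) (notMem_of_mem_reachAvoiding hzA)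
  · exact absurd (hB hzB) (hAB (hA hzA))

theorem swap_eq_or_adj_of_mem_insert [DecidableEq V] (hxy : G.Adj x y) (hxS : x ∉ S)
    (hyS : y ∉ S) (hc : c ∈ insert x S) :
    (Equiv.swap x y c = c ∨ G.Adj c (Equiv.swap x y c)) ∧ Equiv.swap x y c ∈ insert y S := by
  rcases hc with rfl | h
  · rw [Equiv.swap_apply_left]
    exact ⟨.inr hxy, Set.mem_insert y S⟩
  · rw [Equiv.swap_apply_of_ne_of_ne (ne_of_mem_of_not_mem h hxS) (ne_of_mem_of_not_mem h hyS)]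
    exact ⟨.inl rfl, Set.mem_insert_of_mem y h⟩

/- The inductive step of Menger's theorem. `S` separates `A` from `B` in `G - xy` but is too small
for `G`, so `insert x S` and `insert y S` are minimum separators of `G`. A separator of `A` from
`insert x S` in `G - xy` still separates `A` from `B` in `G`, so by induction there are `k`
disjoint walks in `G - xy` from `A` to `insert x S`, and likewise from `B` to `insert y S`. They
meet only in `S` and are joined there and through the edge `xy`. -/
theorem hasDisjointWalks_of_separates_deleteEdges [Finite V] (hxy : G.Adj x y)
    (ih : ∀ A' B' : Set V, (∀ T, (G.deleteEdges {s(x, y)}).Separates T A' B' → k ≤ T.ncard) →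
      (G.deleteEdges {s(x, y)}).HasDisjointWalks A' B' k)
    (hmin : ∀ T, G.Separates T A B → k ≤ T.ncard)
    (hS : (G.deleteEdges {s(x, y)}).Separates S A B) (hSk : S.ncard < k)
    (hx : x ∈ (G.deleteEdges {s(x, y)}).reachAvoiding A S)
    (hy : y ∉ (G.deleteEdges {s(x, y)}).reachAvoiding A S) (hyS : y ∉ S) :
    G.HasDisjointWalks A B k := by
  classical
  have hyx : G.deleteEdges {s(y, x)} = G.deleteEdges {s(x, y)} := by rw [Sym2.eq_swap]
  have hxS : x ∉ S := notMem_of_mem_reachAvoiding hx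
  have hxB := Set.disjoint_left.1 hS.disjoint_reachAvoiding hx
  have hSB : (G.deleteEdges {s(y, x)}).Separates S B A := hyx ▸ hS.symm
  have hXk : (insert x S).ncard = k :=
    le_antisymm ((Set.ncard_insert_le _ _).trans hSk) (hmin _ hS.insert_of_deleteEdges)
  have hYk : (insert y S).ncard = k :=
    le_antisymm ((Set.ncard_insert_le _ _).trans hSk) (hmin _ hSB.insert_of_deleteEdges.symm)
  obtain ⟨a, c, P, ha, hc, hP, hPA⟩ := (ih A (insert x S) fun T hT =>
    hmin T (hS.of_separates_deleteEdges_insert hxy hy hyS hT)).exists_fan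
  obtain ⟨b, d, Q, hb, hd, hQ, hQB⟩ := (ih B (insert y S) fun T hT => hmin T
    (hSB.of_separates_deleteEdges_insert hxy.symm (hyx ▸ hxB) hxS (hyx ▸ hT)).symm).exists_fan
  have hdY := Set.range_eq_of_injective_of_ncard_eq hd
    (injective_of_pairwise_disjoint hQ fun i => (Q i).end_mem_support) hYk
  have hswap := fun i => swap_eq_or_adj_of_mem_insert hxy hxS hyS (hc i)
  refine hasDisjointWalks_of_glue (Equiv.swap x y).injective
    (fun i => (P i).mapLe (deleteEdges_le _)) (fun i => (Q i).mapLe (deleteEdges_le _)) ha hb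
    (by simpa only [Walk.support_mapLe_eq_support] using hP)
    (by simpa only [Walk.support_mapLe_eq_support] using hQ) (fun i => (hswap i).1)
    (fun i => by rw [← Set.mem_range, hdY]; exact (hswap i).2) fun i j z hzi hzj => ?_
  rw [Walk.support_mapLe_eq_support] at hzi hzj
  exact hS.eq_swap_of_mem_reachAvoiding hx hy hyS (hc i) (hd j) (hPA i z hzi) (hQB j z hzj)

theorem exists_dart_of_separates_deleteEdges {e : Sym2 V}
    (hS : (G.deleteEdges {e}).Separates S A B) (hG : ¬G.Separates S A B) :
    ∃ d : G.Dart, d.edge = e ∧ d.fst ∈ (G.deleteEdges {e}).reachAvoiding A S ∧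
      d.snd ∉ (G.deleteEdges {e}).reachAvoiding A S ∧ d.snd ∉ S := by
  simp only [Separates, not_forall, not_exists, not_and] at hG
  obtain ⟨a, ha, b, hb, p, hp⟩ := hG
  have hb' : b ∉ (G.deleteEdges {e}).reachAvoiding A S := fun h =>
    Set.disjoint_left.1 hS.disjoint_reachAvoiding h
      (mem_reachAvoiding_of_mem hb (hp b p.end_mem_support))
  obtain ⟨d, hd, hfst, hsnd⟩ :=
    p.exists_boundary_dart _ (mem_reachAvoiding_of_mem ha (hp a p.start_mem_support)) hb'
  have hdS : d.snd ∉ S := hp _ (p.dart_snd_mem_support_of_mem_darts hd)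
  refine ⟨d, by_contra fun hne => hsnd (mem_reachAvoiding_of_adj hfst ?_ hdS), hfst, hsnd, hdS⟩
  exact (deleteEdges_adj ..).2 ⟨d.adj, by simpa [Dart.edge] using hne⟩

theorem separates_inter_of_edgeSet_eq_empty (h : G.edgeSet = ∅) : G.Separates (A ∩ B) A B := by
  rintro a ha b hb (_ | ⟨hadj, _⟩)
  · exact ⟨a, by simp, ha, hb⟩
  · exact absurd (h ▸ G.mem_edgeSet.2 hadj) (Set.notMem_empty _)

theorem hasDisjointWalks_of_le_ncard_inter [Finite V] (h : k ≤ (A ∩ B).ncard) :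
    G.HasDisjointWalks A B k := by
  have := Fintype.ofFinite ↥(A ∩ B)
  obtain ⟨f⟩ := Function.Embedding.nonempty_of_card_le (α := Fin k) (β := ↥(A ∩ B))
    (by rwa [Fintype.card_fin, ← Nat.card_eq_fintype_card, Nat.card_coe_set_eq])
  refine ⟨fun i => f i, fun i => f i, fun i => .nil, fun i => (f i).2.1, fun i => (f i).2.2,
    fun i j hij => ?_⟩
  simpa using fun h => hij (f.injective (Subtype.ext h)).symm

theorem hasDisjointWalks_of_forall_separates [Finite V]
    (h : ∀ S, G.Separates S A B → k ≤ S.ncard) : G.HasDisjointWalks A B k := by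
  induction hn : G.edgeSet.ncard using Nat.strong_induction_on generalizing G A B with
  | _ n ih =>
  rcases G.edgeSet.eq_empty_or_nonempty with hE | ⟨e, he⟩
  · exact hasDisjointWalks_of_le_ncard_inter (h _ (separates_inter_of_edgeSet_eq_empty hE))
  have hlt : (G.deleteEdges {e}).edgeSet.ncard < n := by
    rw [edgeSet_deleteEdges, ← hn]
    exact Set.ncard_sdiff_singleton_lt_of_mem he
  have ih' A' B' := ih _ hlt (G := G.deleteEdges {e}) (A := A') (B := B') (hn := rfl)
  by_cases hG' : ∀ S, (G.deleteEdges {e}).Separates S A B → k ≤ S.ncard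
  · exact (ih' A B hG').mono (deleteEdges_le _)
  push Not at hG'
  obtain ⟨S, hS, hSk⟩ := hG'
  obtain ⟨⟨⟨x, y⟩, hxy⟩, rfl, hx, hy, hyS⟩ :=
    exists_dart_of_separates_deleteEdges hS fun hG => (h S hG).not_gt hSk
  exact hasDisjointWalks_of_separates_deleteEdges hxy ih' h hS hSk hx hy hyS

theorem Walk.IsPath.exists_middle {p : G.Walk u v} (hp : p.IsPath) (huv : u ≠ v)
    (hadj : ¬G.Adj u v) : ∃ a b, G.Adj u a ∧ G.Adj v b ∧ ∃ m : G.Walk a b,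
      u ∉ m.support ∧ v ∉ m.support ∧ m.support ⊆ p.support := by
  have hp0 : ¬p.Nil := Walk.not_nil_of_ne huv
  have hp1 : ¬p.tail.Nil := fun h => hadj (h.eq ▸ p.adj_snd hp0)
  have hm : p.tail.dropLast.support = p.support.tail.dropLast := by
    rw [Walk.support_dropLast hp1, p.support_tail_of_not_nil hp0]
  refine ⟨_, _, p.adj_snd hp0, (p.tail.adj_penultimate hp1).symm, p.tail.dropLast, ?_, ?_, ?_⟩
  · rw [hm]
    have := hp.support_nodup
    rw [← p.cons_tail_support, List.nodup_cons] at this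
    exact fun h => this.1 (List.dropLast_subset _ h)
  · have := hp.tail
    rw [← Walk.concat_dropLast (p.tail.adj_penultimate hp1), Walk.concat_isPath_iff] at this
    exact this.2
  · rw [hm]
    exact fun _ h => List.tail_subset _ (List.dropLast_subset _ h)

theorem Walk.exists_support_eq_deleteVerts (p : G.Walk a b) (hp : ∀ z ∈ p.support, z ∉ W) :
    ∃ q : ((⊤ : G.Subgraph).deleteVerts W).spanningCoe.Walk a b, q.support = p.support := by
  refine ⟨p.transfer _ fun e he => ?_, Walk.support_transfer _ _⟩
  induction e using Sym2.ind with
  | _ x y =>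
    simpa using ⟨hp x (p.fst_mem_support_of_mem_edges he), hp y (p.snd_mem_support_of_mem_edges he),
      p.adj_of_mem_edges he⟩

theorem Walk.notMem_support_of_deleteVerts
    {p : ((⊤ : G.Subgraph).deleteVerts W).spanningCoe.Walk a b} (ha : a ∉ W) :
    ∀ z ∈ p.support, z ∉ W := by
  induction p with
  | nil => simpa using ha
  | cons h p ih =>
    rw [Subgraph.spanningCoe_adj, Subgraph.deleteVerts_adj] at h
    intro z hz
    rw [Walk.support_cons, List.mem_cons] at hz
    exact hz.elim (· ▸ ha) (ih h.2.2.2.1 z)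

-- `((⊤ : G.Subgraph).deleteVerts {u, v}).spanningCoe` is `G - {u, v}`, kept on the vertex
-- type `V` with `u` and `v` isolated.
theorem separates_of_separates_deleteVerts (huv : u ≠ v) (hadj : ¬G.Adj u v)
    (hS : ((⊤ : G.Subgraph).deleteVerts {u, v}).spanningCoe.Separates S
      (G.neighborSet u) (G.neighborSet v)) :
    G.Separates (S \ {u, v}) {u} {v} := by
  classical
  intro u' hu v' hv p
  rw [Set.mem_singleton_iff] at hu hv
  subst u' v'
  obtain ⟨a, b, hua, hvb, m, hmu, hmv, hmp⟩ := p.bypass_isPath.exists_middle huv hadj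
  obtain ⟨m', hm'⟩ := m.exists_support_eq_deleteVerts (W := {u, v}) fun z hz h =>
    h.elim (fun h => hmu (h ▸ hz)) fun h => hmv (h ▸ hz)
  obtain ⟨s, hs, hsS⟩ := hS a hua b hvb m'
  rw [hm'] at hs
  refine ⟨s, p.support_bypass_subset_support (hmp hs), hsS, ?_⟩
  rintro (rfl | rfl)
  exacts [hmu hs, hmv hs]

theorem Walk.exists_path_cons_concat (huv : u ≠ v) (hua : G.Adj u a) (hbv : G.Adj b v)
    (m : G.Walk a b) (hu : u ∉ m.support) (hv : v ∉ m.support) :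
    ∃ P : G.Path u v, P.1.snd = a ∧ ∀ z ∈ P.1.support, z = u ∨ z ∈ m.support ∨ z = v := by
  classical
  have hM := m.support_bypass_subset_support
  refine ⟨⟨.cons hua (m.bypass.concat hbv), ?_⟩, Walk.snd_cons _ _, fun z hz => ?_⟩
  · refine (m.bypass_isPath.concat (fun h => hv (hM h)) _).cons ?_
    rw [Walk.support_concat, List.mem_append, List.mem_singleton]
    exact fun h => h.elim (fun h => hu (hM h)) huv
  · dsimp only at hz
    rw [Walk.support_cons, List.mem_cons, Walk.support_concat, List.mem_append,
      List.mem_singleton] at hz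
    exact hz.imp_right (Or.imp_left fun h => hM h)

theorem hasIDPaths_of_hasDisjointWalks_deleteVerts (huv : u ≠ v) (hadj : ¬G.Adj u v)
    (h : ((⊤ : G.Subgraph).deleteVerts {u, v}).spanningCoe.HasDisjointWalks
      (G.neighborSet u) (G.neighborSet v) k) :
    HasIDPaths G u v k := by
  classical
  obtain ⟨a, b, m, ha, hb, hm⟩ := h
  have hP : ∀ i, ∃ P : G.Path u v, P.1.snd = a i ∧
      ∀ z ∈ P.1.support, z = u ∨ z ∈ (m i).support ∨ z = v := fun i => by
    have hau : a i ∉ ({u, v} : Set V) := by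
      rintro (h | h)
      · exact G.loopless.irrefl u (h ▸ ha i)
      · exact hadj (h ▸ ha i)
    have hmW := Walk.notMem_support_of_deleteVerts (p := m i) hau
    have := Walk.exists_path_cons_concat huv (ha i) (hb i).symm
      ((m i).mapLe (Subgraph.spanningCoe_le _))
    simp only [Walk.support_mapLe_eq_support] at this
    exact this (fun h => hmW u h (.inl rfl)) (fun h => hmW v h (.inr rfl))
  choose P hPa hP using hP
  refine ⟨P, fun i j hij => ?_, fun i j hij z hzi hzj => ?_⟩
  · exact injective_of_pairwise_disjoint hm (fun i => (m i).start_mem_support)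
      ((hPa i).symm.trans (hij ▸ hPa j))
  · rcases hP i z hzi with hzi | hzi | hzi
    · exact .inl hzi
    · rcases hP j z hzj with hzj | hzj | hzj
      · exact .inl hzj
      · exact absurd hzj (hm hij hzi)
      · exact .inr hzj
    · exact .inr hzi

theorem hasIDPaths_of_forall_separates [Finite V] (huv : u ≠ v) (hadj : ¬G.Adj u v)
    (h : ∀ T, u ∉ T → v ∉ T → G.Separates T {u} {v} → k ≤ T.ncard) : HasIDPaths G u v k :=
  hasIDPaths_of_hasDisjointWalks_deleteVerts huv hadj <| hasDisjointWalks_of_forall_separates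
    fun S hS => (h _ (fun h => h.2 (.inl rfl)) (fun h => h.2 (.inr rfl))
      (separates_of_separates_deleteVerts huv hadj hS)).trans (Set.ncard_le_ncard Set.sdiff_subset)

theorem ncard_setOf_exists_mem_support_le [Finite V] {ι : Type*} {P : ι → G.Path w r}
    (hP : ∀ i j, i ≠ j → ∀ z, z ∈ (P i).1.support → z ∈ (P j).1.support → z = w ∨ z = r)
    (hw : w ∉ X) (hr : r ∉ X) : {i | ∃ x ∈ X, x ∈ (P i).1.support}.ncard ≤ X.ncard := by
  have : Nonempty V := ⟨w⟩
  have : ∀ i ∈ {i | ∃ x ∈ X, x ∈ (P i).1.support}, ∃ x ∈ X, x ∈ (P i).1.support := fun _ h => h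
  choose! f hfX hfP using this
  refine Set.ncard_le_ncard_of_injOn f hfX (fun i hi j hj hij => ?_)
  by_contra hne
  rcases hP i j hne (f i) (hfP i hi) (hij ▸ hfP j hj) with h | h
  exacts [hw (h ▸ hfX i hi), hr (h ▸ hfX i hi)]

theorem injective_penultimate {ι : Type*} {P : ι → G.Path w r} (hinj : P.Injective)
    (hP : ∀ i j, i ≠ j → ∀ z, z ∈ (P i).1.support → z ∈ (P j).1.support → z = w ∨ z = r)
    (hwr : w ≠ r) : Function.Injective fun i => (P i).1.penultimate := by
  intro i j hij
  by_contra hne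
  simp only at hij
  have hnil : ∀ i, ¬(P i).1.Nil := fun i => Walk.not_nil_of_ne hwr
  have he : ∀ i, s((P i).1.penultimate, r) ∈ (P i).1.edges := fun i =>
    Walk.mk_penultimate_end_mem_edges (hnil i)
  rcases hP i j hne _ ((P i).1.fst_mem_support_of_mem_edges (he i))
      (hij ▸ (P j).1.fst_mem_support_of_mem_edges (he j)) with h | h
  · have hi := (P i).2.eq_adj_toWalk_of_mem_edges (by simpa only [h] using he i)
    have hj := (P j).2.eq_adj_toWalk_of_mem_edges (by simpa only [← hij, h] using he j)
    exact hne (hinj (Subtype.ext (hi.trans hj.symm)))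
  · exact (Walk.adj_penultimate (hnil i)).ne h

end SimpleGraph

namespace HasIDPaths

variable {V : Type*} {G : SimpleGraph V} {T : Set V} {o r u v w : V} {k : ℕ}

theorem symm (h : HasIDPaths G u v k) : HasIDPaths G v u k := by
  obtain ⟨P, hinj, hP⟩ := h
  refine ⟨fun i => (P i).reverse, fun i j hij => hinj ?_, fun i j hij w hwi hwj => ?_⟩
  · exact Subtype.ext (by simpa using congrArg (fun p : G.Path v u => p.1.reverse) hij)
  · simp only [Path.reverse_coe, Walk.support_reverse, List.mem_reverse] at hwi hwj
    exact (hP i j hij w hwi hwj).symm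

theorem succ_of_adj_s3 (h : HasIDPaths (G.deleteEdges {s(u, v)}) u v k)
    (hadj : G.Adj u v) : HasIDPaths G u v (k + 1) := by
  obtain ⟨P, hinj, hP⟩ := h
  let Q (i : Fin k) : G.Path u v := ⟨(P i).1.mapLe (deleteEdges_le _), (P i).2.mapLe _⟩
  refine ⟨Fin.cons (Path.singleton hadj) Q, Fin.cons_injective_iff.2 ⟨?_, fun i j hij => ?_⟩, ?_⟩
  · rintro ⟨i, hi⟩
    have he : s(u, v) ∈ (Q i).1.edges := by simp [hi]
    rw [Walk.edges_mapLe_eq_edges] at he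
    simpa using (P i).1.edges_subset_edgeSet he
  · exact hinj (Subtype.ext (Walk.map_injective_of_injective (f := Hom.ofLE (deleteEdges_le _))
      Function.injective_id u v (congrArg Subtype.val hij)))
  · intro i j hij w hwi hwj
    induction i using Fin.cases with
    | zero => simpa using hwi
    | succ i =>
      induction j using Fin.cases with
      | zero => simpa using hwj
      | succ j =>
        simp only [Fin.cons_succ, Q, Walk.support_mapLe_eq_support] at hwi hwj
        exact hP i j (fun h => hij (h ▸ rfl)) w hwi hwj

theorem deleteEdges_of_succ (h : HasIDPaths G w r (k + 1)) (how : o ≠ w)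
    (hor : o ≠ r) : HasIDPaths (G.deleteEdges {s(w, o)}) w r k := by
  obtain ⟨P, hinj, hP⟩ := h
  obtain ⟨j, hj⟩ : ∃ j, ∀ i, i ≠ j → o ∉ (P i).1.support := by
    by_cases ho : ∃ j, o ∈ (P j).1.support
    · obtain ⟨j, hj⟩ := ho
      exact ⟨j, fun i hij hi => (hP i j hij o hi hj).elim how hor⟩
    · push Not at ho
      exact ⟨0, fun i _ => ho i⟩
  have he : ∀ i, s(w, o) ∉ (P (j.succAbove i)).1.edges := fun i he =>
    hj _ (Fin.succAbove_ne j i) ((P _).1.snd_mem_support_of_mem_edges he)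
  refine ⟨fun i => ⟨(P (j.succAbove i)).1.toDeleteEdge _ (he i),
    Walk.IsPath.toDeleteEdges _ _ (P _).2 _⟩, fun i i' hii' => ?_, fun i i' hii' z hzi hzi' => ?_⟩
  · have := congrArg (fun p => p.1.map (Hom.ofLE (deleteEdges_le {s(w, o)}))) hii'
    simp only [Walk.map_toDeleteEdges_eq] at this
    exact Fin.succAbove_right_injective (hinj (Subtype.ext this))
  · simp only [Walk.support_transfer] at hzi hzi'
    exact hP _ _ (Fin.succAbove_right_injective.ne hii') z hzi hzi'

theorem le_ncard_of_notMem_reachAvoiding [Finite V] (h : HasIDPaths G w r k)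
    (hw : w ∉ T) (hr : r ∉ T) (hrT : r ∉ G.reachAvoiding {w} T) : k ≤ T.ncard := by
  obtain ⟨P, -, hP⟩ := h
  have huniv : {i | ∃ x ∈ T, x ∈ (P i).1.support} = Set.univ := by
    refine Set.eq_univ_of_forall fun i => ?_
    by_contra hi
    simp only [Set.mem_ofPred_eq, not_exists, not_and] at hi
    exact hrT ⟨w, rfl, (P i).1, fun z hz hzT => hi z hzT hz⟩
  simpa [huniv] using ncard_setOf_exists_mem_support_le hP hw hr

theorem two_le_ncard_neighborSet_inter_reachAvoiding [Finite V]
    (h : HasIDPaths G w r k) (hwr : w ≠ r) (hw : w ∉ T) (hr : r ∈ T) (hT : T.ncard < k) :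
    2 ≤ (G.neighborSet r ∩ G.reachAvoiding {w} T).ncard := by
  obtain ⟨P, hinj, hP⟩ := h
  set bad := {i | ∃ x ∈ T \ {r}, x ∈ (P i).1.support}
  have hgood : 2 ≤ badᶜ.ncard := by
    have h₁ : bad.ncard ≤ (T \ {r}).ncard :=
      ncard_setOf_exists_mem_support_le hP (fun h => hw h.1) (fun h => h.2 rfl)
    have h₂ := Set.ncard_sdiff_singleton_add_one hr
    have h₃ := Set.ncard_add_ncard_compl bad
    rw [Nat.card_fin] at h₃
    omega
  have hnil : ∀ i, ¬(P i).1.Nil := fun i => Walk.not_nil_of_ne hwr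
  calc 2 ≤ badᶜ.ncard := hgood
    _ = ((fun i => (P i).1.penultimate) '' badᶜ).ncard :=
      (Set.ncard_image_of_injective _ (injective_penultimate hinj hP hwr)).symm
    _ ≤ _ := Set.ncard_le_ncard ?_
  rintro _ ⟨i, hi, rfl⟩
  refine ⟨(Walk.adj_penultimate (hnil i)).symm, w, rfl, (P i).1.dropLast, fun z hz hzT => ?_⟩
  have hpath := (P i).2
  rw [← Walk.concat_dropLast (Walk.adj_penultimate (hnil i)), Walk.concat_isPath_iff] at hpath
  refine hi ⟨z, ⟨hzT, fun h => hpath.2 (h ▸ hz)⟩, ?_⟩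
  rw [Walk.support_dropLast (hnil i)] at hz
  exact List.dropLast_subset _ hz

theorem le_ncard_of_separates [Finite V] (hu : HasIDPaths G u r k)
    (hv : HasIDPaths G v r k) (hur : u ≠ r) (hvr : v ≠ r) (hN : (G.neighborSet r).ncard < 4)
    (hT : G.Separates T {u} {v}) (huT : u ∉ T) (hvT : v ∉ T) : k ≤ T.ncard := by
  have hdisj := hT.disjoint_reachAvoiding
  by_cases hrT : r ∈ T
  · by_contra! hk
    have := calc
      4 ≤ (G.neighborSet r ∩ G.reachAvoiding {u} T).ncard +
          (G.neighborSet r ∩ G.reachAvoiding {v} T).ncard :=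
        add_le_add (hu.two_le_ncard_neighborSet_inter_reachAvoiding hur huT hrT hk)
          (hv.two_le_ncard_neighborSet_inter_reachAvoiding hvr hvT hrT hk)
      _ = (G.neighborSet r ∩ G.reachAvoiding {u} T ∪
          G.neighborSet r ∩ G.reachAvoiding {v} T).ncard :=
        (Set.ncard_union_eq (hdisj.mono Set.inter_subset_right Set.inter_subset_right)).symm
      _ ≤ (G.neighborSet r).ncard :=
        Set.ncard_le_ncard (Set.union_subset Set.inter_subset_left Set.inter_subset_left)
    omega
  · rcases not_and_or.1 fun h : r ∈ _ ∧ r ∈ _ => Set.disjoint_left.1 hdisj h.1 h.2 with h | h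
    · exact hu.le_ncard_of_notMem_reachAvoiding huT hrT h
    · exact hv.le_ncard_of_notMem_reachAvoiding hvT hrT h

end HasIDPaths

/-- If `k ∈ {2,3}`, `Hr` is `k`-in-connected to `r`, and `r` has exactly `k` neighbors,
then `Hr` is `k`-connected. -/
theorem kInConnected_with_k_root_neighbors_is_kConnected
    {V : Type*} [Fintype V] (Hr : SimpleGraph V) (r : V) (k : ℕ)
    (hk : k = 2 ∨ k = 3)
    (hin : ∀ v : V, v ≠ r → HasIDPaths Hr v r k)
    (hR : (Hr.neighborSet r).ncard = k) :
    KConnected Hr k := by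
  intro u v huv
  rcases eq_or_ne v r with rfl | hvr
  · exact hin u huv
  rcases eq_or_ne u r with rfl | hur
  · exact (hin v hvr).symm
  have hN : (Hr.neighborSet r).ncard < 4 := by omega
  by_cases hadj : Hr.Adj u v
  · obtain ⟨m, rfl⟩ : ∃ m, k = m + 1 := ⟨k - 1, by omega⟩
    have hu := (hin u hur).deleteEdges_of_succ huv.symm hvr
    have hv := (hin v hvr).deleteEdges_of_succ huv hur
    rw [Sym2.eq_swap] at hv
    refine (hasIDPaths_of_forall_separates huv (by simp) fun T huT hvT hT => ?_).succ_of_adj_s3 hadj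
    exact hu.le_ncard_of_separates hv hur hvr
      ((Set.ncard_le_ncard (neighborSet_mono (deleteEdges_le _) r)).trans_lt hN) hT huT hvT
  · exact hasIDPaths_of_forall_separates huv hadj fun T huT hvT hT =>
      (hin u hur).le_ncard_of_separates (hin v hvr) hur hvr hN hT huT hvT
end
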